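/- Let E be a real Hilbert space and let L be an orthomodular lattice admitting a strong set of E-valued states. Then for every n ≥ 2, all a, b : Fin n → L with a(i) ⊥ a(j) for all i ≠ j and a(i) ⊥ b(i) for all i, and every r ∈ L with r ⊥ ⨆_i a(i), equation E*ₙ holds: ((⨆_i a(i)) ∪ r) ∩ ⨅_i (a(i) ∪ b(i)) ≤ (⨆_i b(i)) ∪ r. -/

import Mathlib

/-- An ortholattice: a bounded lattice with an orthocomplementation. -/
class Ortholattice (α : Type*) extends Lattice α, BoundedOrder α where
  ocompl : α → α
  sup_ocompl : ∀ a : α, a ⊔ ocompl a = ⊤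
  inf_ocompl : ∀ a : α, a ⊓ ocompl a = ⊥
  ocompl_anti : ∀ a b : α, a ≤ b → ocompl b ≤ ocompl a
  ocompl_ocompl : ∀ a : α, ocompl (ocompl a) = a

postfix:max "ᗮ" => Ortholattice.ocompl

/-- An orthomodular lattice. -/
class OrthomodularLattice (α : Type*) extends Ortholattice α where
  orthomodular : ∀ a b : α, a ≤ b → b = a ⊔ (aᗮ ⊓ b)

/-- The Sasaki hook `x → y = x′ ∪ (x ∩ y)`. -/
def oimp {α : Type*} [Ortholattice α] (x y : α) : α := xᗮ ⊔ (x ⊓ y)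

/-- An `E`-valued state on an ortholattice, for a real Hilbert space `E`. -/
structure HState (E : Type*) [NormedAddCommGroup E] [InnerProductSpace ℝ E]
    (α : Type*) [Ortholattice α] where
  val : α → E
  norm_top : ‖val ⊤‖ = 1
  additive : ∀ a b : α, a ≤ bᗮ → val (a ⊔ b) = val a + val b
  orthogonal : ∀ a b : α, a ≤ bᗮ → (inner ℝ (val a) (val b) : ℝ) = 0

/-- A strong set of `E`-valued states. -/
def IsStrongHSet {E : Type*} [NormedAddCommGroup E] [InnerProductSpace ℝ E]
    {α : Type*} [Ortholattice α] (S : Set (HState E α)) : Prop :=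
  ∀ a b : α, (∀ s ∈ S, ‖s.val a‖ = 1 → ‖s.val b‖ = 1) → a ≤ b

/-! The state `s` of the strongness condition with `‖s(c)‖ = 1` for the left-hand side `c` is
constant, equal to `u = s(c)`, on every element above `c`; so `u = s(aᵢ) + s(bᵢ)` for each `i`
and `u = ∑ s(aᵢ) + s(r)`, all decompositions orthogonal. Pairing with `v = s(⋁ bᵢ ⊔ r)`, which
satisfies `⟪v, s(x)⟫ = ‖s(x)‖²` for `x = bᵢ, r`, and summing over `i` gives
`n ⟪v, u⟫ = ⟪v, u⟫ + n - 1`. For `n ≥ 2` this forces `⟪v, u⟫ = 1`, hence `‖v‖ = 1`. -/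

open RealInnerProductSpace Finset

theorem Ortholattice.le_ocompl_comm {α : Type*} [Ortholattice α] {x y : α} (h : y ≤ xᗮ) :
    x ≤ yᗮ := by
  simpa only [Ortholattice.ocompl_ocompl] using Ortholattice.ocompl_anti _ _ h

theorem inner_eq_one_of_sum_add_eq {E : Type*} [NormedAddCommGroup E] [InnerProductSpace ℝ E]
    {ι : Type*} [Fintype ι] (hι : 1 < Fintype.card ι) {x y : ι → E} {u v w : E}
    (hxy : ∀ i, x i + y i = u) (hxw : ∑ i, x i + w = u)
    (hy : ∀ i, ⟪v, y i⟫ = ‖y i‖ ^ 2) (hw : ⟪v, w⟫ = ‖w‖ ^ 2)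
    (hxy_norm : ∀ i, ‖x i‖ ^ 2 + ‖y i‖ ^ 2 = 1) (hxw_norm : ∑ i, ‖x i‖ ^ 2 + ‖w‖ ^ 2 = 1) :
    ⟪v, u⟫ = 1 := by
  set N : ℝ := (Fintype.card ι : ℝ)
  have hy' : ∀ i, ‖y i‖ ^ 2 = 1 - ‖x i‖ ^ 2 := fun i => by linarith [hxy_norm i]
  have key : N * ⟪v, u⟫ = ⟪v, u⟫ + N - 1 := calc
    N * ⟪v, u⟫ = ∑ i, ⟪v, x i + y i⟫ := by simp [hxy, N]
    _ = ⟪v, ∑ i, x i⟫ + ∑ i, (1 - ‖x i‖ ^ 2) := by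
      simp only [inner_add_right, sum_add_distrib, hy, hy', inner_sum]
    _ = (⟪v, u⟫ - ‖w‖ ^ 2) + (N - ∑ i, ‖x i‖ ^ 2) := by
      rw [← hxw, inner_add_right, hw, sum_sub_distrib]
      simp [N]
    _ = ⟪v, u⟫ + N - 1 := by linarith
  have hN : N - 1 ≠ 0 := sub_ne_zero.2 (Nat.one_lt_cast.2 hι).ne'
  exact mul_left_cancel₀ hN (by linear_combination key)

namespace HState

variable {E : Type*} [NormedAddCommGroup E] [InnerProductSpace ℝ E]

section Ortholattice

variable {α : Type*} [Ortholattice α] (s : HState E α)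

theorem val_bot : s.val ⊥ = 0 := by
  simpa using s.additive ⊥ ⊥ bot_le

theorem norm_sq_sup {x y : α} (h : x ≤ yᗮ) :
    ‖s.val (x ⊔ y)‖ ^ 2 = ‖s.val x‖ ^ 2 + ‖s.val y‖ ^ 2 := by
  rw [s.additive _ _ h, norm_add_sq_real, s.orthogonal _ _ h]
  ring

theorem norm_le_one (x : α) : ‖s.val x‖ ≤ 1 := by
  have h := s.norm_sq_sup (x := x) (y := xᗮ) (by rw [Ortholattice.ocompl_ocompl])
  rw [Ortholattice.sup_ocompl, s.norm_top] at h
  exact (sq_le_one_iff₀ (norm_nonneg _)).1 (by nlinarith)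

theorem val_finset_sup {ι : Type*} (t : Finset ι) (a : ι → α)
    (ha : (t : Set ι).Pairwise fun i j => a i ≤ (a j)ᗮ) :
    s.val (t.sup a) = ∑ i ∈ t, s.val (a i) := by
  induction t using Finset.cons_induction with
  | empty => simpa using s.val_bot
  | cons i t hit ih =>
    rw [coe_cons, Set.pairwise_insert] at ha
    have hi : t.sup a ≤ (a i)ᗮ :=
      Finset.sup_le fun j hj => (ha.2 j hj fun hij => hit (hij ▸ hj)).2
    rw [sup_cons, sum_cons, s.additive _ _ (Ortholattice.le_ocompl_comm hi), ih ha.1]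

end Ortholattice

section Orthomodular

variable {α : Type*} [OrthomodularLattice α] (s : HState E α)

theorem val_eq_add_of_le {x y : α} (h : x ≤ y) : s.val y = s.val x + s.val (xᗮ ⊓ y) := by
  conv_lhs => rw [OrthomodularLattice.orthomodular x y h]
  exact s.additive _ _ (Ortholattice.le_ocompl_comm inf_le_left)

theorem inner_val_of_le {x y : α} (h : x ≤ y) : ⟪s.val y, s.val x⟫ = ‖s.val x‖ ^ 2 := by
  rw [s.val_eq_add_of_le h, inner_add_left, real_inner_self_eq_norm_sq, real_inner_comm,
    s.orthogonal _ _ (Ortholattice.le_ocompl_comm inf_le_left), add_zero]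

theorem val_eq_of_le_of_norm_eq_one {x y : α} (h : x ≤ y) (hx : ‖s.val x‖ = 1) :
    s.val y = s.val x := by
  have hdist : ‖s.val y - s.val x‖ ^ 2 = ‖s.val y‖ ^ 2 - 1 := by
    rw [norm_sub_sq_real, s.inner_val_of_le h, hx]
    ring
  have hy := s.norm_le_one y
  refine sub_eq_zero.1 (norm_eq_zero.1 ?_)
  nlinarith [norm_nonneg (s.val y), norm_nonneg (s.val y - s.val x)]

theorem norm_sq_finset_sup {ι : Type*} (t : Finset ι) (a : ι → α)
    (ha : (t : Set ι).Pairwise fun i j => a i ≤ (a j)ᗮ) :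
    ‖s.val (t.sup a)‖ ^ 2 = ∑ i ∈ t, ‖s.val (a i)‖ ^ 2 := by
  rw [← real_inner_self_eq_norm_sq]
  nth_rewrite 2 [s.val_finset_sup t a ha]
  rw [inner_sum]
  exact sum_congr rfl fun i hi => s.inner_val_of_le (le_sup hi)

theorem EstarN_norm_eq_one {ι : Type*} [Fintype ι] (hι : 1 < Fintype.card ι)
    (a b : ι → α) (r : α) (haa : Pairwise fun i j => a i ≤ (a j)ᗮ)
    (hab : ∀ i, a i ≤ (b i)ᗮ) (hr : r ≤ (univ.sup a)ᗮ)
    (hc : ‖s.val ((univ.sup a ⊔ r) ⊓ univ.inf fun i => a i ⊔ b i)‖ = 1) :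
    ‖s.val (univ.sup b ⊔ r)‖ = 1 := by
  set u := s.val ((univ.sup a ⊔ r) ⊓ univ.inf fun i => a i ⊔ b i)
  have hr' := Ortholattice.le_ocompl_comm hr
  have hc_ab : ∀ i, s.val (a i ⊔ b i) = u := fun i =>
    s.val_eq_of_le_of_norm_eq_one (inf_le_right.trans (inf_le (mem_univ i))) hc
  have hc_ar : s.val (univ.sup a ⊔ r) = u := s.val_eq_of_le_of_norm_eq_one inf_le_left hc
  have hinner : ⟪s.val (univ.sup b ⊔ r), u⟫ = 1 := by
    refine inner_eq_one_of_sum_add_eq hι (x := fun i => s.val (a i)) (y := fun i => s.val (b i))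
      (w := s.val r) (fun i => ?_) ?_ (fun i => s.inner_val_of_le ?_)
      (s.inner_val_of_le le_sup_right) (fun i => ?_) ?_
    · rw [← s.additive _ _ (hab i), hc_ab]
    · rw [← s.val_finset_sup _ _ (haa.set_pairwise _), ← s.additive _ _ hr', hc_ar]
    · exact (le_sup (mem_univ i)).trans le_sup_left
    · rw [← s.norm_sq_sup (hab i), hc_ab, hc, one_pow]
    · rw [← s.norm_sq_finset_sup _ _ (haa.set_pairwise _), ← s.norm_sq_sup hr', hc_ar, hc, one_pow]
  refine le_antisymm (s.norm_le_one _) ?_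
  calc 1 = ⟪s.val (univ.sup b ⊔ r), u⟫ := hinner.symm
    _ ≤ ‖s.val (univ.sup b ⊔ r)‖ * ‖u‖ := real_inner_le_norm _ _
    _ = ‖s.val (univ.sup b ⊔ r)‖ := by rw [hc, mul_one]

end Orthomodular

end HState

theorem EstarN_of_strong_hilbert_states_general {E : Type*} [NormedAddCommGroup E]
    [InnerProductSpace ℝ E]
    {α : Type*} [OrthomodularLattice α]
    (S : Set (HState E α)) (hS : IsStrongHSet S)
    (n : ℕ) (hn : 2 ≤ n) (a b : Fin n → α) (r : α)
    (haa : ∀ i j : Fin n, i ≠ j → a i ≤ (a j)ᗮ)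
    (hab : ∀ i : Fin n, a i ≤ (b i)ᗮ)
    (hr : r ≤ (Finset.univ.sup a)ᗮ) :
    (Finset.univ.sup a ⊔ r) ⊓ Finset.univ.inf (fun i => a i ⊔ b i) ≤
      Finset.univ.sup b ⊔ r :=
  hS _ _ fun s _ hc =>
    s.EstarN_norm_eq_one (by rwa [Fintype.card_fin]) a b r haa hab hr hc

theorem EstarN_of_strong_hilbert_states {E : Type*} [NormedAddCommGroup E]
    [InnerProductSpace ℝ E] [CompleteSpace E]
    {α : Type*} [OrthomodularLattice α]
    (S : Set (HState E α)) (hS : IsStrongHSet S)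
    (n : ℕ) (hn : 2 ≤ n) (a b : Fin n → α) (r : α)
    (haa : ∀ i j : Fin n, i ≠ j → a i ≤ (a j)ᗮ)
    (hab : ∀ i : Fin n, a i ≤ (b i)ᗮ)
    (hr : r ≤ (Finset.univ.sup a)ᗮ) :
    (Finset.univ.sup a ⊔ r) ⊓ Finset.univ.inf (fun i => a i ⊔ b i) ≤
      Finset.univ.sup b ⊔ r :=
  EstarN_of_strong_hilbert_states_general S hS n hn a b r haa hab hr
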